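/- arXiv:2108.04100 — 6 statements merged into one kernel-verified Lean document; each statement's English description precedes it below -/
import Mathlib

section
/- The function f(x) = (e^x - 1)/x for x ≠ 0, with f(0) = 1, is strictly convex on ℝ: its second derivative f''(x) = ((x² - 2x + 2)e^x - 2)/x³ is strictly positive for x ≠ 0, and f''(0) = 1/3 > 0. -/
/-!
Write `P n x = ∫₀ˣ tⁿ eᵗ dt` and `Q n x = P n x / x^(n+1) = ∫₀¹ tⁿ e^{tx} dt`, with `Q n 0 = 1/(n+1)`.
Then `f = Q 0` and `Q n' = Q (n+1)`: away from 0 by the quotient rule, and at 0 because `Q n` and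
`Q (n+1)` are continuous there (l'Hôpital, as `P n' = xⁿ eˣ`). For even `n`, `P n` is strictly
increasing with `P n 0 = 0`, so `P n x` has the sign of `x^(n+1)` and `Q n > 0`; in particular
`f'' = Q 2 > 0`.
-/

open Real Filter Set Topology

-- `expPowIntegral n x = ∫₀ˣ tⁿ eᵗ dt`; the recursion is integration by parts.
noncomputable def expPowIntegral : ℕ → ℝ → ℝ
  | 0, x => exp x - 1
  | n + 1, x => x ^ (n + 1) * exp x - (n + 1) * expPowIntegral n x

-- `expMoment n x = ∫₀¹ tⁿ e^{tx} dt`.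
noncomputable def expMoment (n : ℕ) (x : ℝ) : ℝ :=
  if x = 0 then ((n : ℝ) + 1)⁻¹ else expPowIntegral n x / x ^ (n + 1)

namespace expPowIntegral

theorem hasDerivAt (n : ℕ) (x : ℝ) : HasDerivAt (expPowIntegral n) (x ^ n * exp x) x := by
  induction n with
  | zero => simpa [expPowIntegral] using (hasDerivAt_exp x).sub_const 1
  | succ n ih =>
    have := ((hasDerivAt_pow (n + 1) x).mul (hasDerivAt_exp x)).sub (ih.const_mul ((n : ℝ) + 1))
    refine this.congr_deriv ?_
    rw [Nat.add_sub_cancel]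
    push_cast
    ring

theorem continuous (n : ℕ) : Continuous (expPowIntegral n) :=
  continuous_iff_continuousAt.2 fun x => (hasDerivAt n x).continuousAt

@[simp]
theorem apply_zero (n : ℕ) : expPowIntegral n 0 = 0 := by
  induction n with
  | zero => simp [expPowIntegral]
  | succ n ih => simp [expPowIntegral, ih]

theorem pos_of_pos (n : ℕ) {x : ℝ} (hx : 0 < x) : 0 < expPowIntegral n x := by
  have hmono : StrictMonoOn (expPowIntegral n) (Ici 0) :=
    strictMonoOn_of_hasDerivWithinAt_pos (convex_Ici 0) (continuous n).continuousOn
      (fun y _ => (hasDerivAt n y).hasDerivWithinAt)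
      (fun y hy => by rw [interior_Ici] at hy; exact mul_pos (pow_pos hy n) (exp_pos y))
  simpa using hmono self_mem_Ici hx.le hx

theorem neg_of_neg {n : ℕ} (hn : Even n) {x : ℝ} (hx : x < 0) : expPowIntegral n x < 0 := by
  have hmono : StrictMonoOn (expPowIntegral n) (Iic 0) :=
    strictMonoOn_of_hasDerivWithinAt_pos (convex_Iic 0) (continuous n).continuousOn
      (fun y _ => (hasDerivAt n y).hasDerivWithinAt)
      (fun y hy => by
        rw [interior_Iic] at hy
        exact mul_pos (hn.pow_pos hy.ne) (exp_pos y))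
  simpa using hmono hx.le self_mem_Iic hx

theorem tendsto_div_pow (n : ℕ) :
    Tendsto (fun x => expPowIntegral n x / x ^ (n + 1)) (𝓝[≠] 0) (𝓝 ((n : ℝ) + 1)⁻¹) := by
  have hlim : Tendsto (fun x => exp x / ((n : ℝ) + 1)) (𝓝[≠] 0) (𝓝 ((n : ℝ) + 1)⁻¹) := by
    simpa using ((continuous_exp.div_const ((n : ℝ) + 1)).tendsto 0).mono_left nhdsWithin_le_nhds
  refine HasDerivAt.lhopital_zero_nhdsNE (f' := fun x => x ^ n * exp x)
    (g' := fun x => ((n : ℝ) + 1) * x ^ n) (.of_forall fun x => hasDerivAt n x)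
    (.of_forall fun x => by simpa using hasDerivAt_pow (n + 1) x) ?_ ?_ ?_ ?_
  · filter_upwards [self_mem_nhdsWithin] with x hx
    exact mul_ne_zero (by positivity) (pow_ne_zero n hx)
  · simpa using ((continuous n).tendsto 0).mono_left nhdsWithin_le_nhds
  · simpa using ((continuous_pow (n + 1)).tendsto (0 : ℝ)).mono_left nhdsWithin_le_nhds
  · refine hlim.congr' ?_
    filter_upwards [self_mem_nhdsWithin] with x hx
    field_simp [pow_ne_zero n (hx : x ≠ 0)]

end expPowIntegral

namespace expMoment

@[simp]
theorem apply_zero (n : ℕ) : expMoment n 0 = ((n : ℝ) + 1)⁻¹ := if_pos rfl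

theorem apply_of_ne (n : ℕ) {x : ℝ} (hx : x ≠ 0) :
    expMoment n x = expPowIntegral n x / x ^ (n + 1) := if_neg hx

theorem eventuallyEq_of_ne (n : ℕ) {x : ℝ} (hx : x ≠ 0) :
    expMoment n =ᶠ[𝓝 x] fun y => expPowIntegral n y / y ^ (n + 1) := by
  filter_upwards [isOpen_ne.mem_nhds hx] with y hy
  exact apply_of_ne n hy

theorem continuousAt_zero (n : ℕ) : ContinuousAt (expMoment n) 0 := by
  rw [← continuousWithinAt_compl_self, ContinuousWithinAt, apply_zero]
  refine (expPowIntegral.tendsto_div_pow n).congr' ?_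
  filter_upwards [self_mem_nhdsWithin] with x hx
  exact (apply_of_ne n hx).symm

theorem hasDerivAt_of_ne (n : ℕ) {x : ℝ} (hx : x ≠ 0) :
    HasDerivAt (expMoment n) (expMoment (n + 1) x) x := by
  have hquot := (expPowIntegral.hasDerivAt n x).div (hasDerivAt_pow (n + 1) x) (pow_ne_zero _ hx)
  refine (hquot.congr_deriv ?_).congr_of_eventuallyEq (eventuallyEq_of_ne n hx)
  rw [apply_of_ne _ hx, expPowIntegral, Nat.add_sub_cancel]
  field_simp
  push_cast
  ring

theorem hasDerivAt (n : ℕ) (x : ℝ) : HasDerivAt (expMoment n) (expMoment (n + 1) x) x :=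
  hasDerivAt_of_hasDerivAt_of_ne' (fun _ hy => hasDerivAt_of_ne n hy) (continuousAt_zero n)
    (continuousAt_zero (n + 1)) x

theorem continuous (n : ℕ) : Continuous (expMoment n) :=
  continuous_iff_continuousAt.2 fun x => (hasDerivAt n x).continuousAt

theorem pos {n : ℕ} (hn : Even n) (x : ℝ) : 0 < expMoment n x := by
  rcases lt_trichotomy x 0 with hx | rfl | hx
  · rw [apply_of_ne n hx.ne]
    exact div_pos_of_neg_of_neg (expPowIntegral.neg_of_neg hn hx) (hn.add_one.pow_neg hx)
  · rw [apply_zero]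
    positivity
  · rw [apply_of_ne n hx.ne']
    exact div_pos (expPowIntegral.pos_of_pos n hx) (pow_pos hx _)

theorem two_of_ne {x : ℝ} (hx : x ≠ 0) :
    expMoment 2 x = ((x ^ 2 - 2 * x + 2) * exp x - 2) / x ^ 3 := by
  rw [apply_of_ne 2 hx]
  congr 1
  simp only [expPowIntegral]
  ring

end expMoment

/-- The smooth extension `f` of `(e^x - 1)/x` at 0 is strictly convex on ℝ;
its second derivative equals `((x² - 2x + 2)e^x - 2)/x³ > 0` for `x ≠ 0`,
and `f''(0) = 1/3 > 0`. -/
theorem stmt_3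
    (f : ℝ → ℝ)
    (hf : ∀ x : ℝ, f x = if x = 0 then 1 else (Real.exp x - 1) / x) :
    StrictConvexOn ℝ Set.univ f ∧
    (∀ x : ℝ, x ≠ 0 →
      deriv (deriv f) x = ((x ^ 2 - 2 * x + 2) * Real.exp x - 2) / x ^ 3 ∧
      ((x ^ 2 - 2 * x + 2) * Real.exp x - 2) / x ^ 3 > 0) ∧
    (deriv (deriv f) 0 = 1 / 3 ∧ (1 : ℝ) / 3 > 0) := by
  have hf₀ : f = expMoment 0 := funext fun x => by simp [hf, expMoment, expPowIntegral]
  have hf₂ : deriv (deriv f) = expMoment 2 := by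
    simp only [hf₀, fun n => funext fun x => (expMoment.hasDerivAt n x).deriv]
  refine ⟨?_, fun x hx => ?_, ?_, by norm_num⟩
  · refine strictConvexOn_of_deriv2_pos convex_univ ?_ fun x _ => ?_
    · exact hf₀ ▸ (expMoment.continuous 0).continuousOn
    · simpa [hf₂] using expMoment.pos even_two x
  · rw [hf₂, ← expMoment.two_of_ne hx]
    exact ⟨rfl, expMoment.pos even_two x⟩
  · norm_num [hf₂]
end

section
/- For all x > 0, e^x·(e^x(2 - x) - (2 + x)) + (e^x - 1)³ ≥ 0. -/
/-- For all `x > 0`, `e^x (e^x(2 - x) - (2 + x)) + (e^x - 1)³ ≥ 0`. -/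
theorem stmt_8 (x : ℝ) (hx : 0 < x) :
    0 ≤ Real.exp x * (Real.exp x * (2 - x) - (2 + x)) + (Real.exp x - 1) ^ 3 := by
  have hy : 1 < Real.exp x := by simpa using Real.exp_lt_exp.mpr hx
  have hs : x < Real.sinh x := Real.self_lt_sinh_iff.mpr hx
  have hsinh : Real.sinh x = (Real.exp x - Real.exp (-x)) / 2 := Real.sinh_eq x
  have hinv : Real.exp x * Real.exp (-x) = 1 := by rw [← Real.exp_add]; simp
  have h1 : 2 * Real.exp x * x ≤ Real.exp x ^ 2 - 1 := by
    nlinarith [Real.exp_pos x, Real.exp_pos (-x)]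
  nlinarith [mul_le_mul_of_nonneg_left h1 (by linarith : (0:ℝ) ≤ Real.exp x + 1),
    sq_nonneg (Real.exp x - 1), mul_nonneg (sq_nonneg (Real.exp x - 1)) (by linarith : (0:ℝ) ≤ Real.exp x - 1)]
end

section
/- The function h₁(x) = e^{x²}(e^{x²} - 1 - x²)/(e^{x²} - 1)² is strictly increasing on (0, ∞), with limit 1/2 as x → 0⁺ and limit 1 as x → ∞; in particular 1/2 < h₁(x) < 1 for all x > 0. -/
/-!
Substituting `t = x²`, `h₁(x) = g(t)` with `g(t) = h₁OfSq t = eᵗ(eᵗ - 1 - t)/(eᵗ - 1)²`, and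
`g'(t) = eᵗ (t(eᵗ + 1) - 2(eᵗ - 1))/(eᵗ - 1)³`, which is positive for `t > 0` because
`tanh (t/2) < t/2`. The limit `1/2` at `0⁺` comes from the Taylor expansion `eᵗ - 1 - t ~ t²/2`,
the limit `1` at `∞` from `t e⁻ᵗ → 0`. A strictly increasing function lies strictly between its
one-sided limits, which gives the bounds.
-/

open Filter Topology Real Set

theorem StrictMonoOn.lt_of_tendsto_nhdsGT {α β : Type*} [LinearOrder α] [TopologicalSpace α]
    [OrderTopology α] [DenselyOrdered α] [NoMaxOrder α] [Preorder β] [TopologicalSpace β]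
    [ClosedIicTopology β] {f : α → β} {a x : α} {L : β} (hf : StrictMonoOn f (Ioi a))
    (hL : Tendsto f (𝓝[>] a) (𝓝 L)) (hx : a < x) : L < f x := by
  obtain ⟨y, hay, hyx⟩ := exists_between hx
  have hLy : L ≤ f y := le_of_tendsto hL <| by
    filter_upwards [Ioo_mem_nhdsGT hay] with z hz
    exact hf.monotoneOn hz.1 hay hz.2.le
  exact hLy.trans_lt (hf hay hx hyx)

theorem StrictMonoOn.lt_of_tendsto_atTop {α β : Type*} [LinearOrder α] [NoMaxOrder α]
    [Preorder β] [TopologicalSpace β] [ClosedIciTopology β] {f : α → β} {a x : α} {L : β}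
    (hf : StrictMonoOn f (Ioi a)) (hL : Tendsto f atTop (𝓝 L)) (hx : a < x) : f x < L := by
  obtain ⟨y, hxy⟩ := exists_gt x
  have : Nonempty α := ⟨a⟩
  have hyL : f y ≤ L := ge_of_tendsto hL <| by
    filter_upwards [eventually_ge_atTop y] with z hz
    exact hf.monotoneOn (hx.trans hxy) (hx.trans (hxy.trans_le hz)) hz
  exact (hf hx (hx.trans hxy) hxy).trans_le hyL

theorem Real.tendsto_exp_sub_sum_range_div_pow (n : ℕ) :
    Tendsto (fun x ↦ (exp x - ∑ i ∈ Finset.range n, x ^ i / i.factorial) / x ^ n) (𝓝[≠] 0)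
      (𝓝 (1 / n.factorial)) := by
  have h := ((exp_sub_sum_range_succ_isLittleO_pow n).tendsto_div_nhds_zero.mono_left
    (nhdsWithin_le_nhds (s := {0}ᶜ))).add_const (1 / (n.factorial : ℝ))
  rw [zero_add] at h
  refine h.congr' ?_
  filter_upwards [self_mem_nhdsWithin] with x (hx : x ≠ 0)
  rw [Finset.sum_range_succ]
  field_simp
  ring

theorem two_mul_exp_sub_one_lt {t : ℝ} (ht : 0 < t) : 2 * (exp t - 1) < t * (exp t + 1) := by
  let k : ℝ → ℝ := fun s ↦ (s - 2) * exp s + s + 2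
  have hk : ∀ s, HasDerivAt k ((s - 1) * exp s + 1) s := fun s ↦ by
    refine ((((hasDerivAt_id' s).sub_const 2).mul (hasDerivAt_exp s)).add (hasDerivAt_id' s)
      |>.add_const 2).congr_deriv ?_
    ring
  have hk_pos : ∀ s ∈ interior (Ici (0 : ℝ)), 0 < deriv k s := fun s hs ↦ by
    rw [interior_Ici, mem_Ioi] at hs
    have : (1 - s) * exp s < 1 := calc
      (1 - s) * exp s < exp (-s) * exp s := by
        gcongr
        linarith [add_one_lt_exp (neg_ne_zero.mpr hs.ne')]
      _ = 1 := by rw [← exp_add, neg_add_cancel, exp_zero]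
    rw [(hk s).deriv]
    linarith
  have hk_lt := strictMonoOn_of_deriv_pos (convex_Ici 0)
    (fun s _ ↦ (hk s).continuousAt.continuousWithinAt) hk_pos self_mem_Ici ht.le ht
  simp only [k, exp_zero] at hk_lt
  linarith

noncomputable def h₁OfSq (t : ℝ) : ℝ := exp t * (exp t - 1 - t) / (exp t - 1) ^ 2

theorem hasDerivAt_h₁OfSq {t : ℝ} (ht : t ≠ 0) :
    HasDerivAt h₁OfSq (exp t * (t * (exp t + 1) - 2 * (exp t - 1)) / (exp t - 1) ^ 3) t := by
  have hE : exp t - 1 ≠ 0 := sub_ne_zero.mpr ((exp_eq_one_iff t).not.mpr ht)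
  have he := hasDerivAt_exp t
  refine ((he.mul ((he.sub_const 1).sub (hasDerivAt_id' t))).div ((he.sub_const 1).pow 2)
    (pow_ne_zero 2 hE)).congr_deriv ?_
  simp only [Pi.sub_apply, Pi.mul_apply, Pi.pow_apply]
  field_simp
  ring

theorem strictMonoOn_h₁OfSq : StrictMonoOn h₁OfSq (Ioi 0) := by
  refine strictMonoOn_of_deriv_pos (convex_Ioi 0)
    (fun t ht ↦ (hasDerivAt_h₁OfSq (ne_of_gt ht)).continuousAt.continuousWithinAt) fun t ht ↦ ?_
  rw [interior_Ioi, mem_Ioi] at ht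
  rw [(hasDerivAt_h₁OfSq ht.ne').deriv]
  have hE : 0 < exp t - 1 := sub_pos.mpr (one_lt_exp_iff.mpr ht)
  have hk : 0 < t * (exp t + 1) - 2 * (exp t - 1) := sub_pos.mpr (two_mul_exp_sub_one_lt ht)
  positivity

theorem tendsto_h₁OfSq_nhdsNE_zero : Tendsto h₁OfSq (𝓝[≠] 0) (𝓝 (1 / 2)) := by
  have hexp : Tendsto exp (𝓝[≠] 0) (𝓝 1) :=
    (continuous_exp.tendsto' 0 1 exp_zero).mono_left nhdsWithin_le_nhds
  have h1 : Tendsto (fun t ↦ (exp t - 1) / t) (𝓝[≠] 0) (𝓝 1) := by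
    simpa using tendsto_exp_sub_sum_range_div_pow 1
  have h2 : Tendsto (fun t ↦ (exp t - 1 - t) / t ^ 2) (𝓝[≠] 0) (𝓝 (1 / 2)) := by
    simpa [Finset.sum_range_succ, sub_sub] using tendsto_exp_sub_sum_range_div_pow 2
  have h := (hexp.mul h2).div (h1.pow 2) (by norm_num)
  rw [one_mul, one_pow, div_one] at h
  refine h.congr' ?_
  filter_upwards [self_mem_nhdsWithin] with t (ht : t ≠ 0)
  have hE : exp t - 1 ≠ 0 := sub_ne_zero.mpr ((exp_eq_one_iff t).not.mpr ht)
  simp only [Pi.div_apply, h₁OfSq]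
  field_simp

theorem tendsto_h₁OfSq_atTop : Tendsto h₁OfSq atTop (𝓝 1) := by
  have h0 := tendsto_exp_neg_atTop_nhds_zero
  have h1 : Tendsto (fun t ↦ t * exp (-t)) atTop (𝓝 0) := by
    simpa using tendsto_pow_mul_exp_neg_atTop_nhds_zero 1
  have h := (((tendsto_const_nhds (x := (1 : ℝ))).sub h0).sub h1).div
    (((tendsto_const_nhds (x := (1 : ℝ))).sub h0).pow 2) (by norm_num)
  rw [sub_zero, sub_zero, one_pow, div_one] at h
  refine h.congr' ?_
  filter_upwards [eventually_gt_atTop 0] with t ht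
  have hE : exp t - 1 ≠ 0 := sub_ne_zero.mpr ((exp_eq_one_iff t).not.mpr ht.ne')
  simp only [Pi.div_apply, h₁OfSq, exp_neg]
  field_simp

/-- `h₁(x) = e^{x²}(e^{x²} - 1 - x²)/(e^{x²} - 1)²` is strictly increasing on `(0,∞)`,
tends to `1/2` at `0⁺` and to `1` at `∞`; in particular `1/2 < h₁(x) < 1` for `x > 0`. -/
theorem stmt_11
    (h₁ : ℝ → ℝ)
    (hh : ∀ x : ℝ, h₁ x =
      Real.exp (x ^ 2) * (Real.exp (x ^ 2) - 1 - x ^ 2) / (Real.exp (x ^ 2) - 1) ^ 2) :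
    StrictMonoOn h₁ (Set.Ioi 0) ∧
    Tendsto h₁ (𝓝[>] 0) (𝓝 (1 / 2)) ∧
    Tendsto h₁ atTop (𝓝 1) ∧
    (∀ x : ℝ, 0 < x → 1 / 2 < h₁ x ∧ h₁ x < 1) := by
  have hh₁ : h₁ = h₁OfSq ∘ (· ^ 2) := funext hh
  have hmono : StrictMonoOn h₁ (Ioi 0) := hh₁ ▸ strictMonoOn_h₁OfSq.comp
    ((pow_left_strictMonoOn₀ two_ne_zero).mono Ioi_subset_Ici_self)
    fun x (hx : 0 < x) ↦ pow_pos hx 2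
  have hsq : Tendsto (· ^ 2) (𝓝[>] (0 : ℝ)) (𝓝[≠] 0) :=
    tendsto_nhdsWithin_iff.mpr ⟨(continuous_pow 2).tendsto' 0 0 (zero_pow two_ne_zero)
      |>.mono_left nhdsWithin_le_nhds,
      eventually_nhdsWithin_of_forall fun x (hx : 0 < x) ↦ pow_ne_zero 2 hx.ne'⟩
  have hzero : Tendsto h₁ (𝓝[>] 0) (𝓝 (1 / 2)) := hh₁ ▸ tendsto_h₁OfSq_nhdsNE_zero.comp hsq
  have htop : Tendsto h₁ atTop (𝓝 1) :=
    hh₁ ▸ tendsto_h₁OfSq_atTop.comp (tendsto_pow_atTop two_ne_zero)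
  exact ⟨hmono, hzero, htop, fun x hx ↦
    ⟨hmono.lt_of_tendsto_nhdsGT hzero hx, hmono.lt_of_tendsto_atTop htop hx⟩⟩
end

section
/- For all x > 0, u₀(x) - u₀(x²) + x²/2 > 0, where u₀(t) = t²e^t/(e^t - 1)². -/
open Real

lemma sinh_le_mul_cosh {x : ℝ} (hx : 0 ≤ x) : Real.sinh x ≤ x * Real.cosh x := by
  have h : MonotoneOn (fun y : ℝ => y * Real.cosh y - Real.sinh y) (Set.Ici 0) := by
    apply monotoneOn_of_deriv_nonneg (convex_Ici 0)
    · fun_prop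
    · intro y hy
      exact ((differentiableAt_id.mul Real.differentiableAt_cosh).sub
        Real.differentiableAt_sinh).differentiableWithinAt
    · intro y hy
      rw [interior_Ici, Set.mem_Ioi] at hy
      have hder : HasDerivAt (fun y : ℝ => y * Real.cosh y - Real.sinh y)
          (1 * Real.cosh y + y * Real.sinh y - Real.cosh y) y :=
        ((hasDerivAt_id y).mul (Real.hasDerivAt_cosh y)).sub (Real.hasDerivAt_sinh y)
      rw [hder.deriv]
      have := Real.sinh_nonneg_iff.2 hy.le
      nlinarith
  have h0 := h (Set.self_mem_Ici) (Set.mem_Ici.2 hx) hx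
  simp at h0
  linarith

lemma cosh_bound {v : ℝ} (hv : 0 ≤ v) : Real.cosh v * (1 - v ^ 2 / 2) ≤ 1 := by
  have h1 : Real.cosh v = 1 + 2 * Real.sinh (v / 2) ^ 2 := by
    have := Real.cosh_two_mul (v / 2)
    have h2 := Real.cosh_sq (v / 2)
    rw [show 2 * (v / 2) = v by ring] at this
    linarith
  have hs : Real.sinh (v / 2) ≤ (v / 2) * Real.cosh (v / 2) := sinh_le_mul_cosh (by linarith)
  have hsn : 0 ≤ Real.sinh (v / 2) := Real.sinh_nonneg_iff.2 (by linarith)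
  have hsq : Real.sinh (v / 2) ^ 2 ≤ (v / 2) ^ 2 * Real.cosh (v / 2) ^ 2 := by
    have := mul_self_le_mul_self hsn hs
    nlinarith [Real.cosh_pos (v / 2)]
  have hc2 : Real.cosh (v / 2) ^ 2 = (Real.cosh v + 1) / 2 := by
    have := Real.cosh_two_mul (v / 2)
    have h2 := Real.cosh_sq (v / 2)
    rw [show 2 * (v / 2) = v by ring] at this
    linarith
  have h1c : 1 ≤ Real.cosh v := Real.one_le_cosh v
  nlinarith [sq_nonneg v]

lemma key_sinh {s : ℝ} (hs : 0 < s) : Real.sinh s ^ 2 * (1 - 2 * s ^ 2) < s ^ 2 := by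
  rcases le_or_gt (1 - 2 * s ^ 2) 0 with h | h
  · have : Real.sinh s ^ 2 * (1 - 2 * s ^ 2) ≤ 0 :=
      mul_nonpos_of_nonneg_of_nonpos (sq_nonneg _) h
    nlinarith
  · have hs2 : Real.sinh s ^ 2 ≤ s ^ 2 * Real.cosh s ^ 2 := by
      have h1 := sinh_le_mul_cosh hs.le
      have hsn : 0 ≤ Real.sinh s := Real.sinh_nonneg_iff.2 hs.le
      nlinarith [Real.cosh_pos s]
    have hcb : Real.cosh (2 * s) * (1 - (2 * s) ^ 2 / 2) ≤ 1 := cosh_bound (by linarith)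
    have hc2 : Real.cosh s ^ 2 = (Real.cosh (2 * s) + 1) / 2 := by
      have := Real.cosh_two_mul s
      have h2 := Real.cosh_sq s
      linarith
    -- cosh s ^2 * (1 - 2 s^2) ≤ 1 - s^2
    have hstep : Real.cosh s ^ 2 * (1 - 2 * s ^ 2) ≤ 1 - s ^ 2 := by nlinarith
    have h1 := mul_le_mul_of_nonneg_right hs2 h.le
    have h2 := mul_le_mul_of_nonneg_left hstep (sq_nonneg s)
    nlinarith [pow_pos hs 4]

lemma expand {t : ℝ} : (Real.exp t - 1) ^ 2 = 4 * Real.exp t * Real.sinh (t / 2) ^ 2 := by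
  rw [Real.sinh_eq]
  have h : Real.exp (t / 2) * Real.exp (t / 2) = Real.exp t := by
    rw [← Real.exp_add]; ring_nf
  have h2 : Real.exp (-(t / 2)) * Real.exp (t / 2) = 1 := by
    rw [← Real.exp_add]; simp
  nlinarith [Real.exp_pos (t/2)]

lemma u0_le_one {t : ℝ} (ht : 0 < t) :
    t ^ 2 * Real.exp t / (Real.exp t - 1) ^ 2 ≤ 1 := by
  have hd : (0:ℝ) < (Real.exp t - 1) ^ 2 := by
    have h1 := Real.add_one_le_exp t
    have : (0:ℝ) < Real.exp t - 1 := by linarith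
    positivity
  rw [div_le_one hd, expand]
  have hs : t / 2 ≤ Real.sinh (t / 2) := Real.self_le_sinh_iff.2 (by linarith)
  nlinarith [Real.exp_pos t, mul_self_le_mul_self (show (0:ℝ) ≤ t/2 by linarith) hs]

lemma u0_gt {t : ℝ} (ht : 0 < t) :
    1 - t ^ 2 / 2 < t ^ 2 * Real.exp t / (Real.exp t - 1) ^ 2 := by
  have hd : (0:ℝ) < (Real.exp t - 1) ^ 2 := by
    have h1 := Real.add_one_le_exp t
    have : (0:ℝ) < Real.exp t - 1 := by linarith
    positivity
  rw [lt_div_iff₀ hd, expand]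
  have hk := key_sinh (show 0 < t / 2 by linarith)
  have hxp := Real.exp_pos t
  nlinarith [sq_nonneg (Real.sinh (t/2))]

/-- For all `x > 0`, `u₀(x) - u₀(x²) + x²/2 > 0`, where `u₀(t) = t²e^t/(e^t - 1)²`. -/
theorem stmt_12
    (u₀ : ℝ → ℝ)
    (hu : ∀ t : ℝ, u₀ t = t ^ 2 * Real.exp t / (Real.exp t - 1) ^ 2)
    (x : ℝ) (hx : 0 < x) :
    0 < u₀ x - u₀ (x ^ 2) + x ^ 2 / 2 := by
  rw [hu x, hu (x ^ 2)]
  have h1 := u0_gt hx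
  have h2 := u0_le_one (show 0 < x ^ 2 by positivity)
  linarith
end

section
/- The function g(x) = (e^{x²} - 1)/(e^x - 1)² is strictly convex on (0, ∞). -/
/-!
Write `ψ(s) = log ((eˢ - 1) / s)`. On `(0, ∞)` the logarithm of `g` is `ψ(x²) - 2 ψ(x)`, whose
second derivative is `4x² ψ''(x²) + 2 ψ'(x²) - 2 ψ''(x)`. In hyperbolic form, with `s = 2y`,
`ψ'(s) = (1 + coth y - 1/y) / 2` and `ψ''(s) = (1/y² - 1/sinh² y) / 4`; the elementary bounds
`y ≤ sinh y ≤ y cosh y ≤ y e^{y²/2}` give `ψ' ≥ 1/2` and `0 ≤ ψ'' < 1/2`, so `log ∘ g` has a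
positive second derivative. Hence `log ∘ g` is strictly convex, and so is `g = exp ∘ log ∘ g`.
-/

open Real Set

lemma strictConvexOn_of_hasDerivWithinAt2_pos {D : Set ℝ} (hD : Convex ℝ D) {f f' f'' : ℝ → ℝ}
    (hf : ContinuousOn f D) (hf' : ∀ x ∈ interior D, HasDerivWithinAt f (f' x) (interior D) x)
    (hf'' : ∀ x ∈ interior D, HasDerivWithinAt f' (f'' x) (interior D) x)
    (hf''₀ : ∀ x ∈ interior D, 0 < f'' x) : StrictConvexOn ℝ D f := by
  refine StrictMonoOn.strictConvexOn_of_deriv hD hf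
    (StrictMonoOn.congr ?_ (deriv_eqOn isOpen_interior hf').symm)
  refine strictMonoOn_of_hasDerivWithinAt_pos (f' := f'') hD.interior
    (fun x hx => (hf'' x hx).continuousWithinAt) ?_ ?_ <;> rwa [interior_interior]

lemma StrictConvexOn.exp_comp {E : Type*} [AddCommGroup E] [Module ℝ E] {s : Set E} {f : E → ℝ}
    (hf : StrictConvexOn ℝ s f) : StrictConvexOn ℝ s (fun x => exp (f x)) :=
  ⟨hf.1, fun _ hx _ hy hxy _ _ ha hb hab => (exp_lt_exp.2 (hf.2 hx hy hxy ha hb hab)).trans_le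
    (convexOn_exp.2 (mem_univ _) (mem_univ _) ha.le hb.le hab)⟩

lemma exp_sub_one_pos {s : ℝ} (hs : 0 < s) : 0 < exp s - 1 :=
  sub_pos.2 (one_lt_exp_iff.2 hs)

lemma exp_two_mul_sub_one (y : ℝ) : exp (2 * y) - 1 = 2 * exp y * sinh y := by
  rw [sinh_eq, exp_neg, two_mul, exp_add]
  field_simp

lemma sinh_le_mul_cosh_s13 {y : ℝ} (hy : 0 ≤ y) : sinh y ≤ y * cosh y := by
  have hderiv (z : ℝ) : HasDerivAt (fun z => z * cosh z - sinh z) (z * sinh z) z := by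
    refine (((hasDerivAt_id' z).mul (hasDerivAt_cosh z)).sub (hasDerivAt_sinh z)).congr_deriv ?_
    ring
  have hmono : MonotoneOn (fun z => z * cosh z - sinh z) (Ici 0) :=
    monotoneOn_of_hasDerivWithinAt_nonneg (convex_Ici 0)
      (fun z _ => (hderiv z).continuousAt.continuousWithinAt)
      (fun z _ => (hderiv z).hasDerivWithinAt)
      (fun z hz => by rw [interior_Ici] at hz; exact mul_nonneg hz.le (sinh_nonneg_iff.2 hz.le))
  simpa using hmono self_mem_Ici hy hy

lemma sinh_sq_mul_lt {y : ℝ} (hy : 0 < y) : sinh y ^ 2 * (1 - 2 * y ^ 2) < y ^ 2 := by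
  rcases le_or_gt (1 - 2 * y ^ 2) 0 with hneg | hpos
  · nlinarith [mul_nonpos_of_nonneg_of_nonpos (sq_nonneg (sinh y)) hneg]
  have hsinh : sinh y ^ 2 ≤ y ^ 2 * exp (y ^ 2) := by
    have hle : sinh y ≤ y * exp (y ^ 2 / 2) :=
      (sinh_le_mul_cosh_s13 hy.le).trans (mul_le_mul_of_nonneg_left (cosh_le_exp_half_sq y) hy.le)
    calc sinh y ^ 2 ≤ (y * exp (y ^ 2 / 2)) ^ 2 :=
          pow_le_pow_left₀ (sinh_nonneg_iff.2 hy.le) hle 2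
      _ = y ^ 2 * exp (y ^ 2) := by rw [mul_pow, ← exp_nat_mul]; ring_nf
  have hexp : exp (y ^ 2) * (1 - 2 * y ^ 2) < 1 := by
    have : 1 - 2 * y ^ 2 < exp (-y ^ 2) := by
      nlinarith [add_one_le_exp (-y ^ 2), pow_pos hy 2]
    calc exp (y ^ 2) * (1 - 2 * y ^ 2) < exp (y ^ 2) * exp (-y ^ 2) :=
          mul_lt_mul_of_pos_left this (exp_pos _)
      _ = 1 := by rw [← exp_add, add_neg_cancel, exp_zero]
  calc sinh y ^ 2 * (1 - 2 * y ^ 2) ≤ y ^ 2 * (exp (y ^ 2) * (1 - 2 * y ^ 2)) := by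
        rw [← mul_assoc]; exact mul_le_mul_of_nonneg_right hsinh hpos.le
    _ < y ^ 2 := by nlinarith [pow_pos hy 2]

namespace ExpSubOneDiv

-- `ψ s = log ((eˢ - 1) / s)` for `s > 0`; `ψ₁` and `ψ₂` are its first two derivatives there.
noncomputable def ψ (s : ℝ) : ℝ := log (exp s - 1) - log s

noncomputable def ψ₁ (s : ℝ) : ℝ := exp s / (exp s - 1) - 1 / s

noncomputable def ψ₂ (s : ℝ) : ℝ := 1 / s ^ 2 - exp s / (exp s - 1) ^ 2

variable {s y : ℝ}

lemma exp_ψ (hs : 0 < s) : exp (ψ s) = (exp s - 1) / s := by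
  rw [ψ, exp_sub, exp_log (exp_sub_one_pos hs), exp_log hs]

lemma hasDerivAt_ψ (hs : 0 < s) : HasDerivAt ψ (ψ₁ s) s := by
  refine ((((hasDerivAt_exp s).sub_const 1).log (exp_sub_one_pos hs).ne').sub
    (hasDerivAt_log hs.ne')).congr_deriv ?_
  rw [ψ₁, one_div]

lemma hasDerivAt_ψ₁ (hs : 0 < s) : HasDerivAt ψ₁ (ψ₂ s) s := by
  have hE : exp s - 1 ≠ 0 := (exp_sub_one_pos hs).ne'
  have hψ₁ : ψ₁ = fun s => exp s / (exp s - 1) - s⁻¹ := by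
    ext; rw [ψ₁, one_div]
  rw [hψ₁]
  refine (((hasDerivAt_exp s).div ((hasDerivAt_exp s).sub_const 1) hE).sub
    (hasDerivAt_inv hs.ne')).congr_deriv ?_
  rw [ψ₂]
  field_simp
  ring

lemma ψ₁_two_mul (hy : 0 < y) : ψ₁ (2 * y) = (1 + cosh y / sinh y - 1 / y) / 2 := by
  have hsinh : sinh y ≠ 0 := (sinh_pos_iff.2 hy).ne'
  have hexp : exp (2 * y) = exp y * exp y := by rw [two_mul, exp_add]
  rw [ψ₁, exp_two_mul_sub_one, hexp, ← cosh_add_sinh]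
  field_simp
  ring

lemma ψ₂_two_mul (hy : 0 < y) : ψ₂ (2 * y) = (1 / y ^ 2 - 1 / sinh y ^ 2) / 4 := by
  have hsinh : sinh y ≠ 0 := (sinh_pos_iff.2 hy).ne'
  have hexp : exp (2 * y) = exp y * exp y := by rw [two_mul, exp_add]
  rw [ψ₂, exp_two_mul_sub_one, hexp]
  field_simp
  ring

lemma one_half_le_ψ₁ (hs : 0 < s) : 1 / 2 ≤ ψ₁ s := by
  obtain ⟨y, hy, rfl⟩ : ∃ y, 0 < y ∧ s = 2 * y := ⟨s / 2, half_pos hs, by ring⟩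
  have hcoth : 1 / y ≤ cosh y / sinh y :=
    (div_le_div_iff₀ hy (sinh_pos_iff.2 hy)).2 (by linarith [sinh_le_mul_cosh_s13 hy.le])
  rw [ψ₁_two_mul hy]
  linarith

lemma ψ₂_nonneg (hs : 0 < s) : 0 ≤ ψ₂ s := by
  obtain ⟨y, hy, rfl⟩ : ∃ y, 0 < y ∧ s = 2 * y := ⟨s / 2, half_pos hs, by ring⟩
  have hsq : 1 / sinh y ^ 2 ≤ 1 / y ^ 2 :=
    one_div_le_one_div_of_le (pow_pos hy 2) (pow_le_pow_left₀ hy.le (self_le_sinh_iff.2 hy.le) 2)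
  rw [ψ₂_two_mul hy]
  linarith

lemma ψ₂_lt_one_half (hs : 0 < s) : ψ₂ s < 1 / 2 := by
  obtain ⟨y, hy, rfl⟩ : ∃ y, 0 < y ∧ s = 2 * y := ⟨s / 2, half_pos hs, by ring⟩
  have hsinh : 0 < sinh y ^ 2 := pow_pos (sinh_pos_iff.2 hy) 2
  have hbound : 1 / y ^ 2 - 1 / sinh y ^ 2 < 2 := by
    rw [div_sub_div _ _ (pow_pos hy 2).ne' hsinh.ne', div_lt_iff₀ (by positivity)]
    nlinarith [sinh_sq_mul_lt hy]
  rw [ψ₂_two_mul hy]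
  linarith

noncomputable def logG (x : ℝ) : ℝ := ψ (x ^ 2) - 2 * ψ x

variable {x : ℝ}

lemma exp_logG (hx : 0 < x) : exp (logG x) = (exp (x ^ 2) - 1) / (exp x - 1) ^ 2 := by
  have hsq : exp (2 * ψ x) = exp (ψ x) ^ 2 := by rw [sq, ← exp_add, two_mul]
  have hE : exp x - 1 ≠ 0 := (exp_sub_one_pos hx).ne'
  rw [logG, exp_sub, hsq, exp_ψ (pow_pos hx 2), exp_ψ hx]
  field_simp

lemma hasDerivAt_logG (hx : 0 < x) :
    HasDerivAt logG (2 * x * ψ₁ (x ^ 2) - 2 * ψ₁ x) x := by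
  have hsq : HasDerivAt (fun x => ψ (x ^ 2)) (ψ₁ (x ^ 2) * (2 * x)) x :=
    (hasDerivAt_ψ (pow_pos hx 2)).comp (h := fun x => x ^ 2) x
      (by simpa using hasDerivAt_pow 2 x)
  refine (hsq.sub ((hasDerivAt_ψ hx).const_mul 2)).congr_deriv ?_
  ring

lemma hasDerivAt_deriv_logG (hx : 0 < x) :
    HasDerivAt (fun x => 2 * x * ψ₁ (x ^ 2) - 2 * ψ₁ x)
      (2 * ψ₁ (x ^ 2) + 4 * x ^ 2 * ψ₂ (x ^ 2) - 2 * ψ₂ x) x := by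
  have hsq : HasDerivAt (fun x => ψ₁ (x ^ 2)) (ψ₂ (x ^ 2) * (2 * x)) x :=
    (hasDerivAt_ψ₁ (pow_pos hx 2)).comp (h := fun x => x ^ 2) x
      (by simpa using hasDerivAt_pow 2 x)
  refine ((((hasDerivAt_id' x).const_mul 2).mul hsq).sub
    ((hasDerivAt_ψ₁ hx).const_mul 2)).congr_deriv ?_
  ring

lemma strictConvexOn_logG : StrictConvexOn ℝ (Ioi 0) logG := by
  refine strictConvexOn_of_hasDerivWithinAt2_pos (convex_Ioi 0)
    (f' := fun x => 2 * x * ψ₁ (x ^ 2) - 2 * ψ₁ x)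
    (f'' := fun x => 2 * ψ₁ (x ^ 2) + 4 * x ^ 2 * ψ₂ (x ^ 2) - 2 * ψ₂ x)
    (fun x hx => (hasDerivAt_logG hx).continuousAt.continuousWithinAt) ?_ ?_ ?_ <;>
    rw [interior_Ioi]
  · exact fun x hx => (hasDerivAt_logG hx).hasDerivWithinAt
  · exact fun x hx => (hasDerivAt_deriv_logG hx).hasDerivWithinAt
  · intro x (hx : 0 < x)
    have hx2 : 0 < x ^ 2 := pow_pos hx 2
    have hψ₂ : 0 ≤ 4 * x ^ 2 * ψ₂ (x ^ 2) := mul_nonneg (by positivity) (ψ₂_nonneg hx2)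
    linarith [one_half_le_ψ₁ hx2, ψ₂_lt_one_half hx]

end ExpSubOneDiv

/-- `g(x) = (e^{x²} - 1)/(e^x - 1)²` is strictly convex on `(0, ∞)`. -/
theorem stmt_13 :
    StrictConvexOn ℝ (Set.Ioi 0)
      (fun x : ℝ => (Real.exp (x ^ 2) - 1) / (Real.exp x - 1) ^ 2) :=
  ExpSubOneDiv.strictConvexOn_logG.exp_comp.congr fun _ hx => ExpSubOneDiv.exp_logG hx
end

section
/- Fix x₀, l ∈ ℝ with x₀ ≠ l, T > 0, c > 0, d ∈ ℕ, and let ρ, ρ* : [0,T] → ℝ^d be continuous with ρ(t)·ρ*(t) ≥ ‖ρ*(t)‖² > 0 for all t. Then (x₀-l)²·[(exp(∫₀ᵀ ρ·ρ* dt)-1)² - (exp(∫₀ᵀ‖ρ*‖²dt)-1)²] / [(exp(∫₀ᵀ‖ρ*‖²dt)-1)(exp(∫₀ᵀρ·ρ* dt)-1)²] + (cd/2)·[T - exp(-2∫₀ᵀ(ρ·ρ*-‖ρ*‖²)dt)·∫₀ᵀ exp(2∫₀ᵗ(ρ·ρ*-‖ρ*‖²)ds)dt] ≥ 0. -/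
open intervalIntegral

/-!
Both summands are nonnegative. In the first, `ρ·ρ* ≥ ‖ρ*‖² ≥ 0` gives
`0 ≤ ∫‖ρ*‖² ≤ ∫ρ·ρ*`, so `0 ≤ exp (∫‖ρ*‖²) - 1 ≤ exp (∫ρ·ρ*) - 1`. In the second, the primitive
`G t = ∫₀ᵗ (ρ·ρ* - ‖ρ*‖²)` is monotone on `[0,T]`, hence `∫₀ᵀ exp (2 G) ≤ T exp (2 G T)`.
-/

open MeasureTheory Set

lemma mul_sq_sub_sq_div_nonneg {K : Type*} [Field K] [LinearOrder K] [IsStrictOrderedRing K]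
    {k u v : K} (hk : 0 ≤ k) (hv : 0 ≤ v) (hvu : v ≤ u) :
    0 ≤ k * (u ^ 2 - v ^ 2) / (v * u ^ 2) := by
  have hsq : v ^ 2 ≤ u ^ 2 := pow_le_pow_left₀ hv hvu 2
  exact div_nonneg (mul_nonneg hk (sub_nonneg.2 hsq)) (by positivity)

lemma monotoneOn_primitive_of_nonneg {f : ℝ → ℝ} {a b : ℝ}
    (hf : IntervalIntegrable f volume a b) (hf₀ : ∀ t ∈ Icc a b, 0 ≤ f t) :
    MonotoneOn (fun t => ∫ s in a..t, f s) (Icc a b) := by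
  intro x hx y hy hxy
  have hfx : IntervalIntegrable f volume a x :=
    hf.mono_set (uIcc_subset_uIcc_left (mem_uIcc_of_le hx.1 hx.2))
  have hfy : IntervalIntegrable f volume a y :=
    hf.mono_set (uIcc_subset_uIcc_left (mem_uIcc_of_le hy.1 hy.2))
  have hxy₀ : 0 ≤ ∫ s in x..y, f s :=
    integral_nonneg hxy fun s hs => hf₀ s ⟨hx.1.trans hs.1, hs.2.trans hy.2⟩
  have hsub := integral_interval_sub_left hfy hfx
  show ∫ s in a..x, f s ≤ ∫ s in a..y, f s
  linarith

lemma MonotoneOn.intervalIntegral_le_sub_mul {g : ℝ → ℝ} {a b : ℝ} (hab : a ≤ b)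
    (hg : MonotoneOn g (Icc a b)) : ∫ t in a..b, g t ≤ (b - a) * g b := by
  have hgb : ∀ t ∈ Icc a b, g t ≤ g b := fun t ht => hg ht ⟨hab, le_rfl⟩ ht.2
  calc ∫ t in a..b, g t ≤ ∫ _ in a..b, g b :=
        integral_mono_on hab (MonotoneOn.intervalIntegrable (by rwa [uIcc_of_le hab]))
          intervalIntegrable_const hgb
    _ = (b - a) * g b := by rw [intervalIntegral.integral_const, smul_eq_mul]

lemma exp_neg_mul_integral_mul_integral_exp_primitive_le {f : ℝ → ℝ} {T κ : ℝ} (hT : 0 ≤ T)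
    (hκ : 0 ≤ κ) (hf : IntervalIntegrable f volume 0 T) (hf₀ : ∀ t ∈ Icc 0 T, 0 ≤ f t) :
    Real.exp (-κ * ∫ t in (0 : ℝ)..T, f t) *
        ∫ t in (0 : ℝ)..T, Real.exp (κ * ∫ s in (0 : ℝ)..t, f s) ≤ T := by
  set G : ℝ → ℝ := fun t => ∫ s in (0 : ℝ)..t, f s
  have hG : MonotoneOn (fun t => Real.exp (κ * G t)) (Icc 0 T) := fun x hx y hy hxy =>
    Real.exp_le_exp.2 <| mul_le_mul_of_nonneg_left
      (monotoneOn_primitive_of_nonneg hf hf₀ hx hy hxy) hκ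
  calc Real.exp (-κ * G T) * ∫ t in (0 : ℝ)..T, Real.exp (κ * G t)
      ≤ Real.exp (-κ * G T) * ((T - 0) * Real.exp (κ * G T)) :=
        mul_le_mul_of_nonneg_left (hG.intervalIntegral_le_sub_mul hT) (Real.exp_nonneg _)
    _ = T := by rw [sub_zero, mul_left_comm, ← Real.exp_add]; simp

theorem stmt_18_general (d : ℕ) (x₀ l T c : ℝ) (hT : 0 < T) (hc : 0 < c)
    (ρ ρs : ℝ → EuclideanSpace ℝ (Fin d))
    (hρ : Continuous ρ) (hρs : Continuous ρs)
    (hdom : ∀ t ∈ Set.Icc 0 T,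
      (inner ℝ (ρ t) (ρs t) : ℝ) ≥ ‖ρs t‖ ^ 2 ∧ 0 < ‖ρs t‖ ^ 2) :
    0 ≤
      (x₀ - l) ^ 2 *
          ((Real.exp (∫ t in (0 : ℝ)..T, (inner ℝ (ρ t) (ρs t) : ℝ)) - 1) ^ 2 -
            (Real.exp (∫ t in (0 : ℝ)..T, ‖ρs t‖ ^ 2) - 1) ^ 2) /
        ((Real.exp (∫ t in (0 : ℝ)..T, ‖ρs t‖ ^ 2) - 1) *
          (Real.exp (∫ t in (0 : ℝ)..T, (inner ℝ (ρ t) (ρs t) : ℝ)) - 1) ^ 2) +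
      c * d / 2 *
        (T -
          Real.exp (-2 * ∫ t in (0 : ℝ)..T, ((inner ℝ (ρ t) (ρs t) : ℝ) - ‖ρs t‖ ^ 2)) *
            ∫ t in (0 : ℝ)..T,
              Real.exp (2 * ∫ s in (0 : ℝ)..t,
                ((inner ℝ (ρ s) (ρs s) : ℝ) - ‖ρs s‖ ^ 2))) := by
  have hinner : Continuous fun t => (inner ℝ (ρ t) (ρs t) : ℝ) := hρ.inner hρs
  have hnorm : Continuous fun t => ‖ρs t‖ ^ 2 := hρs.norm.pow 2
  have hB₀ : 0 ≤ ∫ t in (0 : ℝ)..T, ‖ρs t‖ ^ 2 :=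
    integral_nonneg hT.le fun t _ => by positivity
  have hBA : ∫ t in (0 : ℝ)..T, ‖ρs t‖ ^ 2 ≤ ∫ t in (0 : ℝ)..T, (inner ℝ (ρ t) (ρs t) : ℝ) :=
    integral_mono_on hT.le (hnorm.intervalIntegrable 0 T) (hinner.intervalIntegrable 0 T)
      fun t ht => (hdom t ht).1
  refine add_nonneg (mul_sq_sub_sq_div_nonneg (sq_nonneg _)
    (sub_nonneg.2 (Real.one_le_exp hB₀)) (by gcongr)) (mul_nonneg (by positivity) ?_)
  exact sub_nonneg.2 <| exp_neg_mul_integral_mul_integral_exp_primitive_le hT.le zero_le_two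
    ((hinner.sub hnorm).intervalIntegrable 0 T) fun t ht => sub_nonneg.2 (hdom t ht).1

/-- The saddle-point inequality `M(ρ*, π⁰) - M(ρ, π⁰) ≥ 0`. -/
theorem stmt_18 (d : ℕ) (x₀ l T c : ℝ) (hxl : x₀ ≠ l) (hT : 0 < T) (hc : 0 < c)
    (ρ ρs : ℝ → EuclideanSpace ℝ (Fin d))
    (hρ : Continuous ρ) (hρs : Continuous ρs)
    (hdom : ∀ t ∈ Set.Icc 0 T,
      (inner ℝ (ρ t) (ρs t) : ℝ) ≥ ‖ρs t‖ ^ 2 ∧ 0 < ‖ρs t‖ ^ 2) :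
    0 ≤
      (x₀ - l) ^ 2 *
          ((Real.exp (∫ t in (0 : ℝ)..T, (inner ℝ (ρ t) (ρs t) : ℝ)) - 1) ^ 2 -
            (Real.exp (∫ t in (0 : ℝ)..T, ‖ρs t‖ ^ 2) - 1) ^ 2) /
        ((Real.exp (∫ t in (0 : ℝ)..T, ‖ρs t‖ ^ 2) - 1) *
          (Real.exp (∫ t in (0 : ℝ)..T, (inner ℝ (ρ t) (ρs t) : ℝ)) - 1) ^ 2) +
      c * d / 2 *
        (T -
          Real.exp (-2 * ∫ t in (0 : ℝ)..T, ((inner ℝ (ρ t) (ρs t) : ℝ) - ‖ρs t‖ ^ 2)) *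
            ∫ t in (0 : ℝ)..T,
              Real.exp (2 * ∫ s in (0 : ℝ)..t,
                ((inner ℝ (ρ s) (ρs s) : ℝ) - ‖ρs s‖ ^ 2))) :=
  stmt_18_general d x₀ l T c hT hc ρ ρs hρ hρs hdom
end
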